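/- Let Z be a nonempty finite subset of V, let Z' ⊇ Z be a subset with V∖Z' finite, let a ∈ V, r ≥ 0, and let ρ be a rotor configuration. If ρ ∈ E_{r,Z}(a,Z'), then the final rotor configuration σ(a,Z';ρ) contains an oriented path that starts at a vertex x with d_G(x,Z) ≥ r and ends at a vertex of Z; in particular σ(a,Z';ρ) ∈ D_r. -/

import Mathlib

/-!
Each rotor of a rotor walk points to the vertex the walker last moved to from there, so at
any time the rotors form an oriented path from every earlier position of the walker to its
current one. At the time `t₂` when the walk enters `Z ⊆ Z'` it stops, and the final
configuration contains a path from the position at time `t₁`, which is at distance at least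
`r` from `Z`, into `Z`. Along this path the distance to `Z` decreases by at most one per step,
so some vertex on it lies at distance exactly `r`.
-/

open Classical

universe u

variable {V : Type u}

/-- A rotor mechanism: for each vertex `x`, `τ x` restricts to a bijection of the
neighbor set of `x` having a single orbit. -/
def IsMechanism (G : SimpleGraph V) (τ : V → V → V) : Prop :=
  ∀ x : V, Set.BijOn (τ x) (G.neighborSet x) (G.neighborSet x) ∧
    ∀ y ∈ G.neighborSet x, ∀ z ∈ G.neighborSet x, ∃ i : ℕ, (τ x)^[i] y = z

/-- One step of the rotor walk with sink `Z`; the walk freezes once it reaches `Z`. -/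
noncomputable def rotorStep [DecidableEq V] (τ : V → V → V) (Z : Set V) :
    V × (V → V) → V × (V → V) := fun p =>
  if p.1 ∈ Z then p
  else (τ p.1 (p.2 p.1), Function.update p.2 p.1 (τ p.1 (p.2 p.1)))

/-- The rotor walk with initial location `a`, sink `Z` and initial rotor
configuration `ρ`: position (first component) and rotor configuration
(second component) at time `t`. -/
noncomputable def rotorWalk [DecidableEq V] (τ : V → V → V) (Z : Set V)
    (a : V) (ρ : V → V) (t : ℕ) : V × (V → V) :=
  (rotorStep τ Z)^[t] (a, ρ)

/-- `Z`-oriented spanning forests of `G`, viewed as rotor configurations,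
normalized to be the identity on `Z` (the values on `Z` are inconsequential). -/
def SFset (G : SimpleGraph V) (Z : Set V) : Set (V → V) :=
  {ρ | (∀ x ∉ Z, G.Adj x (ρ x)) ∧ (∀ x : V, ∃ ℓ : ℕ, ρ^[ℓ] x ∈ Z) ∧ ∀ x ∈ Z, ρ x = x}

/-- The eventual value of an eventually-constant sequence. -/
noncomputable def eventualVal (f : ℕ → V) : V :=
  if h : ∃ t : ℕ, ∀ s : ℕ, t ≤ s → f s = f t then f h.choose else f 0

/-- The final rotor configuration `σ(a, Z; ρ)` of the rotor walk. -/
noncomputable def finalConfig [DecidableEq V] (τ : V → V → V) (Z : Set V)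
    (a : V) (ρ : V → V) : V → V :=
  fun x => eventualVal fun t => (rotorWalk τ Z a ρ t).2 x

/-- `ξ_i(a_0, …, a_{i-1}, Z; ρ)`: the rotor configuration after `i` successive
walkers, started at `a_0, …, a_{i-1}`, have performed rotor walks with sink `Z`. -/
noncomputable def xiConfig [DecidableEq V] (τ : V → V → V) (Z : Set V) (av : ℕ → V) :
    ℕ → (V → V) → (V → V)
  | 0, ρ => ρ
  | i + 1, ρ => finalConfig τ Z (av i) (xiConfig τ Z av i ρ)

/-- The set of times at which the rotor walk (run until it first reaches the
sink `Z`) is at a vertex of `W`; its cardinality is the odometer `u(a,Z;ρ)(W)`. -/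
def visitTimes [DecidableEq V] (τ : V → V → V) (Z : Set V) (a : V) (ρ : V → V)
    (W : Set V) : Set ℕ :=
  {t | (rotorWalk τ Z a ρ t).1 ∈ W ∧ ∀ s < t, (rotorWalk τ Z a ρ s).1 ∉ Z}

/-- The event `E_{r,W}(a,Z)`: the rotor walk with initial location `a` and sink `Z`
visits `W` some time after visiting a vertex at graph distance at least `r` from `W`. -/
def Eset [DecidableEq V] (G : SimpleGraph V) (τ : V → V → V) (r : ℕ) (W : Set V)
    (a : V) (Z : Set V) : Set (V → V) :=
  {ρ | ∃ t₁ t₂ : ℕ, t₁ < t₂ ∧ (∀ s < t₂, (rotorWalk τ Z a ρ s).1 ∉ Z) ∧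
    (∀ w ∈ W, r ≤ G.dist w (rotorWalk τ Z a ρ t₁).1) ∧ (rotorWalk τ Z a ρ t₂).1 ∈ W}

/-- The event `D_r` (relative to the set `Z`): there is an oriented path in `ρ`
from a vertex at graph distance exactly `r` from `Z` to a vertex of `Z`. -/
def Dset (G : SimpleGraph V) (Z : Set V) (r : ℕ) : Set (V → V) :=
  {ρ | ∃ x : V, ∃ ℓ : ℕ, (∀ w ∈ Z, r ≤ G.dist w x) ∧ (∃ w ∈ Z, G.dist w x = r) ∧
    ρ^[ℓ] x ∈ Z}

/-- The transition matrix `P_Z` of simple random walk on `G` killed upon hitting `Z`. -/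
noncomputable def killedP (G : SimpleGraph V) [∀ v : V, Fintype (G.neighborSet v)]
    (Z : Set V) : Matrix {x : V // x ∉ Z} {x : V // x ∉ Z} ℝ :=
  fun x y => if G.Adj x.1 y.1 then (1 : ℝ) / (G.degree x.1) else 0

/-- The Green function `((I - P_Z)⁻¹)_{a,x}` of simple random walk killed at `Z`,
as a function of a pair of vertices (zero if `V ∖ Z` is infinite or `a ∈ Z` or `x ∈ Z`). -/
noncomputable def greenFn (G : SimpleGraph V) [DecidableEq V]
    [∀ v : V, Fintype (G.neighborSet v)] (Z : Set V) (a x : V) : ℝ :=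
  if h : ({y : V | y ∉ Z}).Finite ∧ a ∉ Z ∧ x ∉ Z then
    letI : Fintype {y : V // y ∉ Z} := h.1.fintype
    ((1 - killedP G Z)⁻¹) ⟨a, h.2.1⟩ ⟨x, h.2.2⟩
  else 0

theorem mem_Dset_of_iterate_mem {G : SimpleGraph V} (hconn : G.Connected) {f : V → V}
    (hf : ∀ y, G.Adj y (f y)) {Z : Set V} {r : ℕ} (ℓ : ℕ) {x : V} (hx : ∀ w ∈ Z, r ≤ G.dist w x)
    (hℓ : f^[ℓ] x ∈ Z) : f ∈ Dset G Z r := by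
  induction ℓ generalizing x with
  | zero =>
    have hr : r = 0 := by simpa using hx x hℓ
    exact ⟨x, 0, hx, ⟨x, hℓ, by rw [hr, SimpleGraph.dist_self]⟩, hℓ⟩
  | succ ℓ ih =>
    by_cases hnear : ∃ w ∈ Z, G.dist w x ≤ r
    · obtain ⟨w, hw, hwx⟩ := hnear
      exact ⟨x, ℓ + 1, hx, ⟨w, hw, le_antisymm hwx (hx w hw)⟩, hℓ⟩
    · simp only [not_exists, not_and, not_le] at hnear
      refine ih (fun w hw => ?_) (by rwa [← Function.iterate_succ_apply])
      have hstep : G.dist w x ≤ G.dist w (f x) + G.dist (f x) x := hconn.dist_triangle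
      have hone : G.dist (f x) x = 1 := SimpleGraph.dist_eq_one_iff_adj.mpr (hf x).symm
      have := hnear w hw
      omega

section RotorWalk

variable [DecidableEq V]

theorem exists_iterate_update_eq {ρ : V → V} {x y : V} (ℓ : ℕ) (hℓ : ρ^[ℓ] y = x) (x' : V) :
    ∃ m, (Function.update ρ x x')^[m] y = x' := by
  induction ℓ generalizing y with
  | zero => exact ⟨1, by simp [← hℓ]⟩
  | succ ℓ ih =>
    by_cases hyx : y = x
    · exact ⟨1, by simp [hyx]⟩
    · obtain ⟨m, hm⟩ := ih (y := ρ y) (by rwa [← Function.iterate_succ_apply])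
      exact ⟨m + 1, by rwa [Function.iterate_succ_apply, Function.update_of_ne hyx]⟩

variable (τ : V → V → V) (Z : Set V) (a : V) (ρ : V → V)

theorem rotorWalk_succ (t : ℕ) :
    rotorWalk τ Z a ρ (t + 1) = rotorStep τ Z (rotorWalk τ Z a ρ t) :=
  Function.iterate_succ_apply' _ _ _

theorem rotorStep_of_mem {p : V × (V → V)} (hp : p.1 ∈ Z) : rotorStep τ Z p = p :=
  if_pos hp

theorem rotorStep_fst_of_notMem {p : V × (V → V)} (hp : p.1 ∉ Z) :
    (rotorStep τ Z p).1 = τ p.1 (p.2 p.1) := by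
  simp only [rotorStep, if_neg hp]

theorem rotorStep_snd_of_notMem {p : V × (V → V)} (hp : p.1 ∉ Z) :
    (rotorStep τ Z p).2 = Function.update p.2 p.1 (rotorStep τ Z p).1 := by
  simp only [rotorStep, if_neg hp]

theorem rotorWalk_eq_of_le_of_mem {t s : ℕ} (hts : t ≤ s) (ht : (rotorWalk τ Z a ρ t).1 ∈ Z) :
    rotorWalk τ Z a ρ s = rotorWalk τ Z a ρ t := by
  induction s, hts using Nat.le_induction with
  | base => rfl
  | succ s _ ih => rw [rotorWalk_succ, ih, rotorStep_of_mem τ Z ht]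

theorem finalConfig_eq_of_mem {t : ℕ} (ht : (rotorWalk τ Z a ρ t).1 ∈ Z) :
    finalConfig τ Z a ρ = (rotorWalk τ Z a ρ t).2 := by
  funext x
  have hconst : ∃ t' : ℕ, ∀ s, t' ≤ s →
      (rotorWalk τ Z a ρ s).2 x = (rotorWalk τ Z a ρ t').2 x :=
    ⟨t, fun s hs => by rw [rotorWalk_eq_of_le_of_mem τ Z a ρ hs ht]⟩
  simp only [finalConfig, eventualVal, dif_pos hconst]
  rw [← hconst.choose_spec _ (le_max_left _ t),
    rotorWalk_eq_of_le_of_mem τ Z a ρ (le_max_right _ t) ht]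

theorem exists_iterate_rotorWalk_eq {s t : ℕ} (hst : s ≤ t) :
    ∃ ℓ, (rotorWalk τ Z a ρ t).2^[ℓ] (rotorWalk τ Z a ρ s).1 = (rotorWalk τ Z a ρ t).1 := by
  induction t, hst using Nat.le_induction with
  | base => exact ⟨0, rfl⟩
  | succ t _ ih =>
    obtain ⟨ℓ, hℓ⟩ := ih
    rw [rotorWalk_succ]
    by_cases hZ : (rotorWalk τ Z a ρ t).1 ∈ Z
    · rw [rotorStep_of_mem τ Z hZ]
      exact ⟨ℓ, hℓ⟩
    · rw [rotorStep_snd_of_notMem τ Z hZ]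
      exact exists_iterate_update_eq ℓ hℓ _

theorem rotorWalk_adj {G : SimpleGraph V}
    (hτ : ∀ x, Set.MapsTo (τ x) (G.neighborSet x) (G.neighborSet x))
    (hρ : ∀ x, G.Adj x (ρ x)) (t : ℕ) (x : V) : G.Adj x ((rotorWalk τ Z a ρ t).2 x) := by
  induction t generalizing x with
  | zero => exact hρ x
  | succ t ih =>
    rw [rotorWalk_succ]
    by_cases hZ : (rotorWalk τ Z a ρ t).1 ∈ Z
    · rw [rotorStep_of_mem τ Z hZ]
      exact ih x
    · rw [rotorStep_snd_of_notMem τ Z hZ]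
      by_cases hx : x = (rotorWalk τ Z a ρ t).1
      · subst hx
        rw [Function.update_self, rotorStep_fst_of_notMem τ Z hZ]
        exact hτ _ (ih _)
      · rw [Function.update_of_ne hx]
        exact ih x

end RotorWalk

/-- If `Z` is nonempty finite, `Z ⊆ Z'` with `V ∖ Z'` finite, and
`ρ ∈ E_{r,Z}(a,Z')`, then the final rotor configuration `σ(a,Z';ρ)` contains an
oriented path from a vertex at distance at least `r` from `Z` to a vertex of `Z`;
in particular `σ(a,Z';ρ) ∈ D_r`. -/
theorem stmt10 {V : Type u} [DecidableEq V] (G : SimpleGraph V) (hconn : G.Connected)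
    [∀ v : V, Fintype (G.neighborSet v)] (τ : V → V → V) (hτ : IsMechanism G τ)
    (Z : Set V) (hZ : Z.Nonempty) (hZfin : Z.Finite)
    (Z' : Set V) (hsub : Z ⊆ Z') (hZ'fin : (Z'ᶜ : Set V).Finite)
    (a : V) (r : ℕ) (ρ : V → V) (hρ : ∀ x : V, G.Adj x (ρ x))
    (hE : ρ ∈ Eset G τ r Z a Z') :
    (∃ x : V, ∃ ℓ : ℕ, (∀ w ∈ Z, r ≤ G.dist w x) ∧
        (finalConfig τ Z' a ρ)^[ℓ] x ∈ Z) ∧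
      finalConfig τ Z' a ρ ∈ Dset G Z r := by
  obtain ⟨t₁, t₂, hlt, -, hfar, hmem⟩ := hE
  obtain ⟨ℓ, hℓ⟩ := exists_iterate_rotorWalk_eq τ Z' a ρ hlt.le
  have hD : finalConfig τ Z' a ρ ∈ Dset G Z r := by
    rw [finalConfig_eq_of_mem τ Z' a ρ (hsub hmem)]
    exact mem_Dset_of_iterate_mem hconn
      (rotorWalk_adj τ Z' a ρ (fun x => (hτ x).1.mapsTo) hρ t₂) ℓ hfar (hℓ ▸ hmem)
  obtain ⟨x, m, hxfar, -, hm⟩ := id hD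
  exact ⟨⟨x, m, hxfar, hm⟩, hD⟩
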